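/- arXiv:1606.05638 — 6 statements merged into one kernel-verified Lean document; each statement's English description precedes it below -/
import Mathlib

section
/- Let L be a Lie algebra over ℂ, let x, y, w ∈ L satisfy [x,y] = w, [y,w] = x, [w,x] = y, let z ∈ L and λ ∈ ℂ satisfy [x,z] = λ•y and [y,z] = −λ•x, let s, t ∈ ℝ and set u = s•x + t•y. Then for every integer n ≥ 1, (ad_u)^{2n}(z) = (−1)^{n+1} λ (s²+t²)^n • w. -/
/-- Even-power identity: with `[x,y] = w`, `[y,w] = x`, `[w,x] = y`,
`[x,z] = λ•y`, `[y,z] = -λ•x` and `u = s•x + t•y` (`s, t ∈ ℝ`), for every `n ≥ 1`,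
`(ad u)^(2n) z = (-1)^(n+1) λ (s²+t²)^n • w`. -/
theorem stmt2 {L : Type*} [LieRing L] [LieAlgebra ℂ L]
    (x y w z : L) (lam : ℂ)
    (hxy : ⁅x, y⁆ = w) (hyw : ⁅y, w⁆ = x) (hwx : ⁅w, x⁆ = y)
    (hxz : ⁅x, z⁆ = lam • y) (hyz : ⁅y, z⁆ = (-lam) • x)
    (s t : ℝ) (n : ℕ) (hn : 1 ≤ n) :
    ((LieAlgebra.ad ℂ L ((s : ℂ) • x + (t : ℂ) • y)) ^ (2 * n)) z =
      ((-1 : ℂ) ^ (n + 1) * lam * ((s ^ 2 + t ^ 2 : ℝ) : ℂ) ^ n) • w := by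
  set A := LieAlgebra.ad ℂ L ((s : ℂ) • x + (t : ℂ) • y) with hA
  have hAdef : ∀ v : L, A v = ⁅(s : ℂ) • x + (t : ℂ) • y, v⁆ := fun v => rfl
  have hyx : ⁅y, x⁆ = -w := by rw [← lie_skew, hxy]
  have hxw : ⁅x, w⁆ = -y := by rw [← lie_skew, hwx]
  have hwy : ⁅w, y⁆ = -x := by rw [← lie_skew, hyw]
  have hAy : A y = (s : ℂ) • w := by
    rw [hAdef, add_lie, smul_lie, smul_lie, lie_self, smul_zero, add_zero, hxy]
  have hAx : A x = -((t : ℂ) • w) := by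
    rw [hAdef, add_lie, smul_lie, smul_lie, lie_self, smul_zero, zero_add, hyx,
      smul_neg]
  have hAw : A w = (t : ℂ) • x - (s : ℂ) • y := by
    rw [hAdef, add_lie, smul_lie, smul_lie, hxw, hyw, smul_neg]
    abel
  have hA2w : A (A w) = -(((s ^ 2 + t ^ 2 : ℝ) : ℂ)) • w := by
    rw [hAw, map_sub, map_smul, map_smul, hAx, hAy, smul_neg, smul_smul, smul_smul]
    push_cast
    module
  have hA2z : (A ^ 2) z = (lam * ((s ^ 2 + t ^ 2 : ℝ) : ℂ)) • w := by
    have hAz : A z = (lam * (s : ℂ)) • y - (lam * (t : ℂ)) • x := by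
      rw [hAdef, add_lie, smul_lie, smul_lie, hxz, hyz, smul_smul, smul_smul]
      rw [mul_neg, neg_smul, ← sub_eq_add_neg, mul_comm (s:ℂ) lam, mul_comm (t:ℂ) lam]
    have h2 : (A ^ 2) z = A (A z) := rfl
    rw [h2, hAz, map_sub, map_smul, map_smul, hAy, hAx, smul_neg, sub_neg_eq_add,
      smul_smul, smul_smul, ← add_smul]
    push_cast
    ring_nf
  induction n with
  | zero => omega
  | succ m ih =>
    rcases Nat.eq_zero_or_pos m with hm | hm
    · subst hm
      simpa [mul_comm] using hA2z
    · have ihm := ih hm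
      have hsplit : (A ^ (2 * (m + 1))) z = (A ^ 2) ((A ^ (2 * m)) z) := by
        rw [← Module.End.mul_apply, ← pow_add]; ring_nf
      have h2 : ∀ v : L, (A ^ 2) v = A (A v) := fun v => rfl
      rw [hsplit, ihm, h2, map_smul, map_smul, hA2w, smul_smul]
      push_cast
      ring_nf
end

section
/- Let L be a Lie algebra over ℂ, let x, y, w ∈ L satisfy [x,y] = w, [y,w] = x, [w,x] = y, let z ∈ L and λ ∈ ℂ satisfy [x,z] = λ•y and [y,z] = −λ•x, let s, t ∈ ℝ and set u = s•x + t•y. Then for every integer n ≥ 0, (ad_u)^{2n+1}(z) = (−1)^{n+1} λ (s²+t²)^n • (t•x − s•y). -/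
/-- Odd-power identity: with `[x,y] = w`, `[y,w] = x`, `[w,x] = y`,
`[x,z] = λ•y`, `[y,z] = -λ•x` and `u = s•x + t•y` (`s, t ∈ ℝ`), for every `n ≥ 0`,
`(ad u)^(2n+1) z = (-1)^(n+1) λ (s²+t²)^n • (t•x - s•y)`. -/
theorem stmt3 {L : Type*} [LieRing L] [LieAlgebra ℂ L]
    (x y w z : L) (lam : ℂ)
    (hxy : ⁅x, y⁆ = w) (hyw : ⁅y, w⁆ = x) (hwx : ⁅w, x⁆ = y)
    (hxz : ⁅x, z⁆ = lam • y) (hyz : ⁅y, z⁆ = (-lam) • x)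
    (s t : ℝ) (n : ℕ) :
    ((LieAlgebra.ad ℂ L ((s : ℂ) • x + (t : ℂ) • y)) ^ (2 * n + 1)) z =
      ((-1 : ℂ) ^ (n + 1) * lam * ((s ^ 2 + t ^ 2 : ℝ) : ℂ) ^ n) •
        ((t : ℂ) • x - (s : ℂ) • y) := by
  set f := LieAlgebra.ad ℂ L ((s : ℂ) • x + (t : ℂ) • y) with hf
  have hxx : ⁅x, x⁆ = (0 : L) := lie_self x
  have hyy : ⁅y, y⁆ = (0 : L) := lie_self y
  have hyx : ⁅y, x⁆ = -w := by rw [← hxy, lie_skew]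
  have hxw : ⁅x, w⁆ = -y := by rw [← hwx, lie_skew]
  have h1 : f z = (-lam) • ((t : ℂ) • x - (s : ℂ) • y) := by
    simp only [hf, LieAlgebra.ad_apply, add_lie, smul_lie, hxz, hyz]
    rw [smul_sub]
    simp only [smul_smul]
    module
  have h2 : f ((t : ℂ) • x - (s : ℂ) • y) = (-((s ^ 2 + t ^ 2 : ℝ) : ℂ)) • w := by
    simp only [hf, LieAlgebra.ad_apply, add_lie, smul_lie, lie_sub, lie_smul,
      hxx, hyy, hxy, hyx]
    push_cast
    simp only [smul_smul, smul_zero, smul_neg]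
    module
  have h3 : f w = (t : ℂ) • x - (s : ℂ) • y := by
    simp only [hf, LieAlgebra.ad_apply, add_lie, smul_lie, hxw, hyw, smul_neg]
    module
  induction n with
  | zero => simpa using h1
  | succ n ih =>
    have hpow : 2 * (n + 1) + 1 = (2 * n + 1) + 1 + 1 := by ring
    rw [hpow, pow_succ', pow_succ', Module.End.mul_apply, Module.End.mul_apply, ih,
      map_smul, h2]
    simp only [map_smul, h3, smul_smul]
    congr 1
    push_cast
    ring
end

section
/- Let L be a Lie algebra over ℂ, let x, y, w ∈ L satisfy [x,y] = w, [y,w] = x, [w,x] = y, let s, t ∈ ℝ and set u = s•x + t•y. Then for every integer n ≥ 0, (ad_u)^{2n+1}(y) = (−1)^n s (s²+t²)^n • w. -/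
/-- Odd-power identity underlying Theorem 7.1 (3): with `[x,y] = w`,
`[y,w] = x`, `[w,x] = y` and `u = s•x + t•y` (`s, t ∈ ℝ`), for every `n ≥ 0`,
`(ad u)^(2n+1) y = (-1)^n s (s²+t²)^n • w`. -/
theorem stmt8 {L : Type*} [LieRing L] [LieAlgebra ℂ L]
    (x y w : L)
    (hxy : ⁅x, y⁆ = w) (hyw : ⁅y, w⁆ = x) (hwx : ⁅w, x⁆ = y)
    (s t : ℝ) (n : ℕ) :
    ((LieAlgebra.ad ℂ L ((s : ℂ) • x + (t : ℂ) • y)) ^ (2 * n + 1)) y =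
      ((-1 : ℂ) ^ n * (s : ℂ) * ((s ^ 2 + t ^ 2 : ℝ) : ℂ) ^ n) • w := by
  have hxw : ⁅x, w⁆ = -y := by rw [← lie_skew, hwx]
  have hxx : ⁅x, x⁆ = 0 := lie_self x
  have hyy : ⁅y, y⁆ = 0 := lie_self y
  have hyx : ⁅y, x⁆ = -w := by rw [← lie_skew, hxy]
  set u : L := (s : ℂ) • x + (t : ℂ) • y with hu
  have had2 : (LieAlgebra.ad ℂ L u ^ 2) w = (-(((s^2 + t^2 : ℝ) : ℂ))) • w := by
    have h1 : (LieAlgebra.ad ℂ L u) w = (-(s:ℂ)) • y + (t:ℂ) • x := by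
      simp only [LieAlgebra.ad_apply, hu, add_lie, smul_lie, hxw, hyw, smul_neg, neg_smul]
    have h2 : (LieAlgebra.ad ℂ L u) ((-(s:ℂ)) • y + (t:ℂ) • x) =
        (-(((s^2 + t^2 : ℝ) : ℂ))) • w := by
      simp only [LieAlgebra.ad_apply, hu, add_lie, smul_lie, lie_add, lie_smul,
        hxy, hyx, hxx, hyy, smul_zero, smul_neg, smul_smul]
      push_cast
      module
    calc (LieAlgebra.ad ℂ L u ^ 2) w
        = (LieAlgebra.ad ℂ L u) ((LieAlgebra.ad ℂ L u) w) := by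
          rw [pow_two]; rfl
      _ = _ := by rw [h1, h2]
  induction n with
  | zero =>
    simp only [Nat.mul_zero, Nat.zero_add, pow_one, mul_one, one_mul, pow_zero, LieAlgebra.ad_apply, hu, add_lie, smul_lie, hxy, hyy, smul_zero, add_zero]
  | succ n ih =>
    have : 2 * (n + 1) + 1 = 2 + (2 * n + 1) := by ring
    rw [this, pow_add, Module.End.mul_apply, ih, map_smul, had2, smul_smul]
    congr 1
    push_cast
    ring
end

section
/- Let L be a Lie algebra over ℂ, let x, y, w ∈ L satisfy [x,y] = w, [y,w] = x, [w,x] = y, let s, t ∈ ℝ and set u = s•x + t•y. Then for every integer n ≥ 1, (ad_u)^{2n}(x) = (−1)^n t (s²+t²)^{n−1} • (t•x − s•y) and (ad_u)^{2n}(y) = (−1)^{n+1} s (s²+t²)^{n−1} • (t•x − s•y). -/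
/-- Even-power identities underlying Theorem 7.1 (2), (3): with
`[x,y] = w`, `[y,w] = x`, `[w,x] = y` and `u = s•x + t•y` (`s, t ∈ ℝ`), for every `n ≥ 1`,
`(ad u)^(2n) x = (-1)^n t (s²+t²)^(n-1) • (t•x - s•y)` and
`(ad u)^(2n) y = (-1)^(n+1) s (s²+t²)^(n-1) • (t•x - s•y)`. -/
theorem stmt9 {L : Type*} [LieRing L] [LieAlgebra ℂ L]
    (x y w : L)
    (hxy : ⁅x, y⁆ = w) (hyw : ⁅y, w⁆ = x) (hwx : ⁅w, x⁆ = y)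
    (s t : ℝ) (n : ℕ) (hn : 1 ≤ n) :
    ((LieAlgebra.ad ℂ L ((s : ℂ) • x + (t : ℂ) • y)) ^ (2 * n)) x =
      ((-1 : ℂ) ^ n * (t : ℂ) * ((s ^ 2 + t ^ 2 : ℝ) : ℂ) ^ (n - 1)) •
        ((t : ℂ) • x - (s : ℂ) • y) ∧
    ((LieAlgebra.ad ℂ L ((s : ℂ) • x + (t : ℂ) • y)) ^ (2 * n)) y =
      ((-1 : ℂ) ^ (n + 1) * (s : ℂ) * ((s ^ 2 + t ^ 2 : ℝ) : ℂ) ^ (n - 1)) •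
        ((t : ℂ) • x - (s : ℂ) • y) := by
  set f := LieAlgebra.ad ℂ L ((s : ℂ) • x + (t : ℂ) • y) with hf
  set v : L := (t : ℂ) • x - (s : ℂ) • y with hv
  have hyx : ⁅y, x⁆ = -w := by rw [← lie_skew, hxy]
  have hxw : ⁅x, w⁆ = -y := by rw [← lie_skew, hwx]
  have hfx : f x = -((t : ℂ) • w) := by
    rw [hf, LieAlgebra.ad_apply, add_lie, smul_lie, smul_lie, lie_self, hyx, smul_zero,
      zero_add, smul_neg]
  have hfy : f y = (s : ℂ) • w := by
    rw [hf, LieAlgebra.ad_apply, add_lie, smul_lie, smul_lie, lie_self, hxy, smul_zero,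
      add_zero]
  have hfw : f w = v := by
    rw [hf, hv, LieAlgebra.ad_apply, add_lie, smul_lie, smul_lie, hxw, hyw, smul_neg]
    abel
  have hc : ((s ^ 2 + t ^ 2 : ℝ) : ℂ) = (t : ℂ) * t + (s : ℂ) * s := by
    push_cast; ring
  have hfv : f v = -(((s ^ 2 + t ^ 2 : ℝ) : ℂ)) • w := by
    rw [hv, map_sub, map_smul, map_smul, hfx, hfy, smul_neg, smul_smul, smul_smul, hc]
    rw [neg_smul, add_smul]
    abel
  have hf2v : (f ^ 2) v = (-(((s ^ 2 + t ^ 2 : ℝ) : ℂ))) • v := by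
    rw [pow_two, Module.End.mul_apply, hfv, map_smul, hfw]
  have key : ∀ m : ℕ, (f ^ (2 * m)) v = ((-(((s ^ 2 + t ^ 2 : ℝ) : ℂ))) ^ m) • v := by
    intro m
    induction m with
    | zero => simp
    | succ k ih =>
      have h2 : 2 * (k + 1) = 2 * k + 2 := by ring
      rw [h2, pow_add, Module.End.mul_apply, hf2v, map_smul, ih, smul_smul, pow_succ]
      congr 1
      ring
  obtain ⟨m, rfl⟩ : ∃ m, n = m + 1 := ⟨n - 1, (Nat.succ_pred_eq_of_pos hn).symm⟩
  have hsplit : 2 * (m + 1) = 2 * m + 2 := by ring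
  have hf2x : (f ^ 2) x = -((t : ℂ) • v) := by
    rw [pow_two, Module.End.mul_apply, hfx, map_neg, map_smul, hfw]
  have hf2y : (f ^ 2) y = (s : ℂ) • v := by
    rw [pow_two, Module.End.mul_apply, hfy, map_smul, hfw]
  constructor
  · rw [hsplit, pow_add, Module.End.mul_apply, hf2x, map_neg, map_smul, key m, smul_smul]
    simp only [Nat.add_sub_cancel]
    rw [← neg_smul]
    congr 1
    ring
  · rw [hsplit, pow_add, Module.End.mul_apply, hf2y, map_smul, key m, smul_smul]
    simp only [Nat.add_sub_cancel]
    congr 1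
    ring
end

section
/- Let a, b be integers with a ≥ 2 and b ≥ 2. Define linear maps s₁, s₂ : ℤ² → ℤ² by s₁(c₁, c₂) = (−c₁ + a·c₂, c₂) and s₂(c₁, c₂) = (c₁, b·c₁ − c₂), and set α₁ = (1,0), α₂ = (0,1). Then for every integer m ≥ 0, both coordinates of (s₂∘s₁)^m(α₂) are nonnegative, and both coordinates of (s₂∘s₁)^m(s₂(α₁)) are nonnegative. -/
/-- The simple reflection `s₁` of the rank 2 Weyl group, in simple-root coordinates:
`s₁(c₁, c₂) = (-c₁ + a·c₂, c₂)`. -/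
def refl1 (a : ℤ) (c : ℤ × ℤ) : ℤ × ℤ := (-c.1 + a * c.2, c.2)

/-- The simple reflection `s₂` of the rank 2 Weyl group, in simple-root coordinates:
`s₂(c₁, c₂) = (c₁, b·c₁ - c₂)`. -/
def refl2 (b : ℤ) (c : ℤ × ℤ) : ℤ × ℤ := (c.1, b * c.1 - c.2)

/-- The invariant `0 ≤ c₁ ≤ c₂` is preserved by `s₂ ∘ s₁` when `a, b ≥ 2`. -/
lemma stmt18_invariant (a b : ℤ) (ha : 2 ≤ a) (hb : 2 ≤ b) (m : ℕ) (c : ℤ × ℤ)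
    (h1 : 0 ≤ c.1) (h2 : c.1 ≤ c.2) :
    0 ≤ ((refl2 b ∘ refl1 a)^[m] c).1 ∧
    ((refl2 b ∘ refl1 a)^[m] c).1 ≤ ((refl2 b ∘ refl1 a)^[m] c).2 := by
  induction m generalizing c with
  | zero => exact ⟨h1, h2⟩
  | succ n ih =>
    rw [Function.iterate_succ_apply]
    apply ih
    · show (0:ℤ) ≤ -c.1 + a * c.2
      nlinarith
    · show (-c.1 + a * c.2 : ℤ) ≤ b * (-c.1 + a * c.2) - c.2
      have hx : (0:ℤ) ≤ -c.1 + a * c.2 := by nlinarith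
      have hcx : c.2 ≤ -c.1 + a * c.2 := by nlinarith
      nlinarith [mul_nonneg (by linarith : (0:ℤ) ≤ b - 2) hx]

/-- Section 8 of the paper: `Φ₂(n) ∈ Φ⁺` for `n ≥ 0`. For integers
`a, b ≥ 2`, with `α₁ = (1,0)` and `α₂ = (0,1)`, both coordinates of `(s₂∘s₁)^m(α₂)` and
both coordinates of `(s₂∘s₁)^m(s₂(α₁))` are nonnegative for every `m ≥ 0`. -/
theorem stmt18 (a b : ℤ) (ha : 2 ≤ a) (hb : 2 ≤ b) (m : ℕ) :
    (0 ≤ ((refl2 b ∘ refl1 a)^[m] ((0 : ℤ), (1 : ℤ))).1 ∧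
     0 ≤ ((refl2 b ∘ refl1 a)^[m] ((0 : ℤ), (1 : ℤ))).2) ∧
    (0 ≤ ((refl2 b ∘ refl1 a)^[m] (refl2 b ((1 : ℤ), (0 : ℤ)))).1 ∧
     0 ≤ ((refl2 b ∘ refl1 a)^[m] (refl2 b ((1 : ℤ), (0 : ℤ)))).2) := by
  have h1 := stmt18_invariant a b ha hb m ((0:ℤ), (1:ℤ)) (by norm_num) (by norm_num)
  have h2 := stmt18_invariant a b ha hb m (refl2 b ((1:ℤ), (0:ℤ)))
    (by simp [refl2]) (by simp [refl2]; linarith)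
  exact ⟨⟨h1.1, h1.1.trans h1.2⟩, ⟨h2.1, h2.1.trans h2.2⟩⟩
end

section
/- Let L be a Lie algebra over ℂ, let h, a, b ∈ L and c ∈ ℂ with c ≠ 0 satisfy [h, a] = c•a and [h, b] = −c•b, and suppose ad_a and ad_b are nilpotent. If exp(ad_a) = exp(ad_b) as linear maps on L, then a = 0 and b = 0. -/
/-- The exponential of a nilpotent endomorphism `D` with `D ^ N = 0`, given by the
finite sum `∑_{i < N} D ^ i / i!`. -/
noncomputable def nilpExp {k L : Type*} [Field k] [CharZero k] [AddCommGroup L] [Module k L]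
    (N : ℕ) (D : Module.End k L) : Module.End k L :=
  ∑ i ∈ Finset.range N, (i.factorial : k)⁻¹ • D ^ i

lemma nilpExp_apply_aux {k L : Type*} [Field k] [CharZero k] [AddCommGroup L] [Module k L]
    (N : ℕ) (D : Module.End k L) (hD : D ^ N = 0) (h v : L) (hv : D h = v) (hv0 : D v = 0) :
    nilpExp N D h = h + v := by
  match N with
  | 0 =>
    have h1 : (1 : Module.End k L) = 0 := by simpa using hD
    have hh : h = 0 := by
      have := congrArg (fun f : Module.End k L => f h) h1; simpa using this
    have hvv : v = 0 := by rw [← hv, hh, map_zero]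
    simp [nilpExp, hh, hvv]
  | 1 =>
    have hD0 : D = 0 := by simpa using hD
    have hvv : v = 0 := by rw [← hv, hD0]; rfl
    simp [nilpExp, hvv]
  | (n+2) =>
    have key : ∀ i, (D ^ (i + 1 + 1)) h = 0 := by
      intro i
      have : (D ^ (i + 1 + 1)) h = (D ^ i) (D (D h)) := by
        rw [pow_succ, pow_succ]; rfl
      rw [this, hv, hv0, map_zero]
    have : nilpExp (n+2) D h =
        ∑ i ∈ Finset.range (n+2), ((i.factorial : k)⁻¹ • (D ^ i) h) := by
      simp [nilpExp, LinearMap.sum_apply, LinearMap.smul_apply]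
    rw [this, Finset.sum_range_succ', Finset.sum_range_succ']
    simp only [key, smul_zero, Finset.sum_const_zero, zero_add, pow_one, hv,
      Nat.factorial_one, Nat.cast_one, inv_one, one_smul, pow_zero,
      Nat.factorial_zero, Module.End.one_apply]
    abel

/-- computational core of Lemma 9.6 of the paper. In a complex Lie
algebra, if `[h, a] = c•a`, `[h, b] = -c•b` with `c ≠ 0`, the adjoint endomorphisms of `a`
and `b` are nilpotent (say `(ad a)^Na = 0` and `(ad b)^Nb = 0`), and
`exp(ad a) = exp(ad b)` as linear maps on `L`, then `a = 0` and `b = 0`. -/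
theorem stmt19 {L : Type*} [LieRing L] [LieAlgebra ℂ L]
    (h a b : L) (c : ℂ) (hc : c ≠ 0)
    (hha : ⁅h, a⁆ = c • a) (hhb : ⁅h, b⁆ = (-c) • b)
    (Na Nb : ℕ)
    (hna : (LieAlgebra.ad ℂ L a) ^ Na = 0) (hnb : (LieAlgebra.ad ℂ L b) ^ Nb = 0)
    (hexp : nilpExp Na (LieAlgebra.ad ℂ L a) = nilpExp Nb (LieAlgebra.ad ℂ L b)) :
    a = 0 ∧ b = 0 := by
  have hA : nilpExp Na (LieAlgebra.ad ℂ L a) h = h + (-c) • a := by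
    apply nilpExp_apply_aux _ _ hna
    · show ⁅a, h⁆ = (-c) • a
      rw [← lie_skew, hha]; simp
    · show ⁅a, (-c) • a⁆ = 0
      simp
  have hB : nilpExp Nb (LieAlgebra.ad ℂ L b) h = h + c • b := by
    apply nilpExp_apply_aux _ _ hnb
    · show ⁅b, h⁆ = c • b
      rw [← lie_skew, hhb]; simp
    · show ⁅b, c • b⁆ = 0
      simp
  have heq : (-c) • a = c • b := by
    have := congrArg (fun f : Module.End ℂ L => f h) hexp
    simp only [hA, hB] at this
    exact add_left_cancel this
  have hba : b = -a := by
    have : c • b = c • (-a) := by rw [← heq]; simp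
    exact smul_right_injective L hc this
  have ha0 : a = 0 := by
    have e1 : (-c) • b = -(c • a) := by rw [← hhb, hba, lie_neg, hha]
    have e2 : (-c) • b = c • a := by rw [hba, smul_neg, neg_smul, neg_neg]
    rw [e2] at e1
    have h3 : ((2 : ℂ) * c) • a = ((2 : ℂ) * c) • (0 : L) := by
      rw [mul_smul, two_smul, smul_zero]
      nth_rewrite 2 [e1]
      simp
    have := smul_right_injective L (mul_ne_zero two_ne_zero hc) h3
    exact this
  exact ⟨ha0, by simp [hba, ha0]⟩
end
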